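/- For every n ≥ 0, the number of bilaterally symmetric 2-noncrossing (i.e. noncrossing) matchings satisfies bsm_{2n}(1) = C(2n, n) and bsm_{2n+1}(1) = (1/2)·C(2n+2, n+1), where C(a,b) denotes the binomial coefficient. -/

import Mathlib

/-!
A noncrossing matching is encoded by its Dyck word: an up step at the left end of each arc and a
down step at its right end. The word determines the matching, because the partner of an up step
at `i` is the first `j` after which the path is back at its height at `i`. Bilateral symmetry of
the matching is antipalindromy of the word, so a symmetric noncrossing matching on `[2N]` is
determined by the first half of its path, which can be any path of length `N` that stays weakly
above `0`. Recording such a path by its set `D` of down steps, the paths with `#D ≤ j` number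
`C(N, j)` whenever `2j ≤ N` (Pascal's rule, splitting on the last step), and every such path has
`2 #D ≤ N`; hence `bsm_N(1) = C(N, ⌊N/2⌋)`.
-/

open scoped BigOperators

/-- A matching on `[2n] = Fin (2n)` encoded as a fixed-point-free involution: the
arcs of the matching are the pairs `{i, f i}`. -/
def IsMatchingInv {m : ℕ} (f : Equiv.Perm (Fin m)) : Prop :=
  ∀ i, f (f i) = i ∧ f i ≠ i

/-- The matching is bilaterally symmetric: it equals its reflection in the vertical
axis, i.e. `(i,j)` is an arc iff `(2n+1-j, 2n+1-i)` is (via `Fin.rev`). -/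
def IsBilatSym {m : ℕ} (f : Equiv.Perm (Fin m)) : Prop :=
  ∀ i, f i.rev = (f i).rev

/-- The matching `f` has a `k`-crossing: arcs `(i₁,j₁),…,(i_k,j_k)` with
`i₁ < ⋯ < i_k < j₁ < ⋯ < j_k`. -/
def HasCrossing {m : ℕ} (f : Equiv.Perm (Fin m)) (k : ℕ) : Prop :=
  ∃ a b : Fin k → Fin m, StrictMono a ∧ StrictMono b ∧
    (∀ s t : Fin k, a s < b t) ∧ ∀ s, f (a s) = b s

/-- `bsm_n(d)`: the number of bilaterally symmetric `(d+1)`-noncrossing matchings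
on `[2n]`. -/
noncomputable def bsmCount (n d : ℕ) : ℕ :=
  Nat.card {f : Equiv.Perm (Fin (2 * n)) //
    IsMatchingInv f ∧ IsBilatSym f ∧ ¬ HasCrossing f (d + 1)}

open Finset

namespace BilatSymMatching

def step (b : Bool) : ℤ := if b then 1 else -1

@[simp] lemma step_true : step true = 1 := rfl
@[simp] lemma step_false : step false = -1 := rfl
@[simp] lemma step_not (b : Bool) : step (!b) = -step b := by cases b <;> rfl

def height (w : ℕ → Bool) (k : ℕ) : ℤ := ∑ i ∈ range k, step (w i)

variable {w w' : ℕ → Bool} {i i' j j' k M : ℕ}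

@[simp] lemma height_zero : height w 0 = 0 := rfl

lemma height_succ : height w (k + 1) = height w k + step (w k) := sum_range_succ _ _

lemma height_congr (h : ∀ i < k, w i = w' i) : height w k = height w' k :=
  sum_congr rfl fun i hi => by rw [h i (mem_range.1 hi)]

lemma height_add_sum_Ico (hij : i ≤ j) :
    height w i + ∑ k ∈ Ico i j, step (w k) = height w j :=
  sum_range_add_sum_Ico _ hij

lemma sum_step (s : Finset ℕ) :
    ∑ i ∈ s, step (w i) = (#{i ∈ s | w i = true} : ℤ) - #{i ∈ s | w i = false} := by
  simp [step, sum_ite, sub_eq_add_neg]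

lemma height_eq_sub_card : height w k = k - 2 * #{i ∈ range k | w i = false} := by
  have := card_filter_add_card_filter_not (s := range k) (fun i => w i = true)
  simp only [Bool.not_eq_true, card_range] at this
  rw [height, sum_step]
  omega

lemma sum_step_nonneg {s : Finset ℕ} {g : ℕ → ℕ} (hg : Set.InjOn g s)
    (hmaps : ∀ i ∈ s, w i = false → g i ∈ s ∧ w (g i) = true) :
    0 ≤ ∑ i ∈ s, step (w i) := by
  rw [sum_step, sub_nonneg, Nat.cast_le]
  refine card_le_card_of_injOn g (fun i hi => ?_) (hg.mono fun i hi => ?_)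
  · simp only [coe_filter, Set.mem_ofPred_eq] at hi ⊢
    exact hmaps i hi.1 hi.2
  · exact (mem_filter.1 hi).1

lemma sum_step_eq_zero {s : Finset ℕ} {g : ℕ → ℕ} (hg : Set.InjOn g s)
    (hmaps : ∀ i ∈ s, g i ∈ s ∧ w (g i) = !w i) : ∑ i ∈ s, step (w i) = 0 := by
  have h₁ := sum_step_nonneg (w := w) hg fun i hi hw => by simpa [hw] using hmaps i hi
  have h₂ := sum_step_nonneg (w := fun i => !w i) hg fun i hi hw => by
    simp only [Bool.not_eq_false'] at hw ⊢
    simpa [hw] using hmaps i hi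
  simp only [step_not, sum_neg_distrib, neg_nonneg] at h₂
  exact le_antisymm h₂ h₁

lemma height_le_succ : height w k ≤ height w (k + 1) + 1 := by
  have : -1 ≤ step (w k) := by cases w k <;> simp
  rw [height_succ]
  omega

def IsArc (w : ℕ → Bool) (i j : ℕ) : Prop :=
  i < j ∧ height w (j + 1) = height w i ∧ ∀ k, i < k → k ≤ j → height w i < height w k

def IsLinked (w : ℕ → Bool) (i j : ℕ) : Prop := IsArc w i j ∨ IsArc w j i

namespace IsArc

lemma left_eq_true (h : IsArc w i j) : w i = true := by
  have hup := h.2.2 (i + 1) (Nat.lt_succ_self i) h.1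
  rw [height_succ] at hup
  cases hw : w i
  · rw [hw, step_false] at hup; omega
  · rfl

lemma right_eq_false (h : IsArc w i j) : w j = false := by
  have habove := h.2.2 j h.1 le_rfl
  have hret := h.2.1
  rw [height_succ] at hret
  cases hw : w j
  · rfl
  · rw [hw, step_true] at hret; omega

lemma right_unique (h : IsArc w i j) (h' : IsArc w i j') : j = j' := by
  by_contra hne
  rcases Nat.lt_or_gt_of_ne hne with hlt | hlt
  · exact (h'.2.2 (j + 1) (by have := h.1; omega) hlt).ne h.2.1.symm
  · exact (h.2.2 (j' + 1) (by have := h'.1; omega) hlt).ne h'.2.1.symm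

lemma left_unique (h : IsArc w i j) (h' : IsArc w i' j) : i = i' := by
  by_contra hne
  rcases Nat.lt_or_gt_of_ne hne with hlt | hlt
  · exact (h.2.2 i' hlt h'.1.le).ne (h.2.1.symm.trans h'.2.1)
  · exact (h'.2.2 i hlt h.1.le).ne (h'.2.1.symm.trans h.2.1)

lemma not_crossing (h : IsArc w i j) (h' : IsArc w i' j') (h₁ : i < i') (h₂ : i' < j)
    (h₃ : j < j') : False := by
  have := h.2.2 i' h₁ h₂.le
  have := h'.2.2 (j + 1) (by omega) h₃
  have := h.2.1
  omega

end IsArc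

namespace IsLinked

lemma symm (h : IsLinked w i j) : IsLinked w j i := Or.symm h

lemma ne (h : IsLinked w i j) : i ≠ j := by
  rcases h with h | h <;> [exact h.1.ne; exact h.1.ne']

lemma unique (h : IsLinked w i j) (h' : IsLinked w i j') : j = j' := by
  rcases h with h | h <;> rcases h' with h' | h'
  · exact h.right_unique h'
  · exact absurd h.left_eq_true (by simp [h'.right_eq_false])
  · exact absurd h'.left_eq_true (by simp [h.right_eq_false])
  · exact h.left_unique h'

lemma isArc_of_lt (h : IsLinked w i j) (hij : i < j) : IsArc w i j :=
  h.resolve_right fun h' => absurd h'.1 hij.not_gt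

lemma eq_true_iff_lt (h : IsLinked w i j) : w i = true ↔ i < j := by
  rcases h with h | h
  · simp [h.left_eq_true, h.1]
  · simp [h.right_eq_false, h.1.le]

end IsLinked

lemma exists_isArc (hw : w i = true) (hi : i < M) (hM : height w M ≤ height w i) :
    ∃ j < M, IsArc w i j := by
  have hex : ∃ t, i < t ∧ height w t ≤ height w i := ⟨M, hi, hM⟩
  obtain ⟨hit, hti⟩ := Nat.find_spec hex
  have hmin : ∀ t, i < t → t < Nat.find hex → height w i < height w t := fun t h₁ h₂ =>
    lt_of_not_ge fun h => Nat.find_min hex h₂ ⟨h₁, h⟩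
  have hup : height w (i + 1) = height w i + 1 := by rw [height_succ, hw, step_true]
  obtain ⟨j, hj⟩ : ∃ j, Nat.find hex = j + 1 := ⟨Nat.find hex - 1, by omega⟩
  have hij : i < j := by
    by_contra hij
    rw [show j = i by omega] at hj
    rw [hj] at hti
    omega
  have hjM : j < M := by have := Nat.find_min' hex ⟨hi, hM⟩; omega
  have := hmin j hij (by omega)
  have := height_le_succ (w := w) (k := j)
  rw [hj] at hti
  exact ⟨j, hjM, hij, by omega, fun k hk₁ hk₂ => hmin k hk₁ (by omega)⟩

def IsAntipalindrome (w : ℕ → Bool) (M : ℕ) : Prop := ∀ k < M, w (M - 1 - k) = !w k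

namespace IsAntipalindrome

lemma height_sub_eq_add (ha : IsAntipalindrome w M) :
    ∀ {k}, k ≤ M → height w (M - k) = height w M + height w k
  | 0, _ => by simp
  | k + 1, hk => by
    have := height_succ (w := w) (k := M - (k + 1))
    rw [show M - (k + 1) + 1 = M - k by omega, show M - (k + 1) = M - 1 - k by omega,
      ha k (by omega), step_not, height_sub_eq_add ha (by omega : k ≤ M)] at this
    rw [show M - (k + 1) = M - 1 - k by omega, height_succ]
    linarith

lemma height_eq_zero (ha : IsAntipalindrome w M) : height w M = 0 := by
  have := ha.height_sub_eq_add le_rfl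
  rw [Nat.sub_self, height_zero] at this
  linarith

lemma height_sub (ha : IsAntipalindrome w M) (hk : k ≤ M) : height w (M - k) = height w k := by
  rw [ha.height_sub_eq_add hk, ha.height_eq_zero, zero_add]

lemma eq_of_lt_half {N : ℕ} (ha : IsAntipalindrome w (2 * N))
    (ha' : IsAntipalindrome w' (2 * N)) (h : ∀ k < N, w k = w' k) :
    ∀ k < 2 * N, w k = w' k := fun k hk => by
  by_cases hkN : k < N
  · exact h k hkN
  · have e := ha (2 * N - 1 - k) (by omega)
    have e' := ha' (2 * N - 1 - k) (by omega)
    rw [show 2 * N - 1 - (2 * N - 1 - k) = k by omega, h (2 * N - 1 - k) (by omega)] at e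
    rw [show 2 * N - 1 - (2 * N - 1 - k) = k by omega] at e'
    rw [e, e']

lemma isArc_reflect (ha : IsAntipalindrome w M) (h : IsArc w i j) (hj : j < M) :
    IsArc w (M - 1 - j) (M - 1 - i) := by
  obtain ⟨hij, hret, habove⟩ := h
  have hi : height w (M - 1 - i + 1) = height w i := by
    rw [show M - 1 - i + 1 = M - i by omega, ha.height_sub (by omega)]
  have hj' : height w (M - 1 - j) = height w i := by
    rw [show M - 1 - j = M - (j + 1) by omega, ha.height_sub (by omega), hret]
  refine ⟨by omega, by rw [hi, hj'], fun k hk₁ hk₂ => ?_⟩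
  rw [hj', ← ha.height_sub (by omega : k ≤ M)]
  exact habove _ (by omega) (by omega)

lemma isLinked_reflect (ha : IsAntipalindrome w M) (h : IsLinked w i j) (hi : i < M)
    (hj : j < M) : IsLinked w (M - 1 - i) (M - 1 - j) := by
  rcases h with h | h
  · exact Or.inr (ha.isArc_reflect h hj)
  · exact Or.inl (ha.isArc_reflect h hi)

lemma exists_isLinked (ha : IsAntipalindrome w M) (hnn : ∀ k ≤ M, 0 ≤ height w k)
    (hi : i < M) : ∃ j < M, IsLinked w i j := by
  cases hw : w i
  · have hw' : w (M - 1 - i) = true := by rw [ha i hi, hw]; rfl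
    obtain ⟨j, hjM, hj⟩ := exists_isArc (M := M) hw' (by omega)
      (by rw [ha.height_eq_zero]; exact hnn _ (by omega))
    refine ⟨M - 1 - j, by omega, Or.inr ?_⟩
    simpa [show M - 1 - (M - 1 - i) = i by omega] using ha.isArc_reflect hj hjM
  · obtain ⟨j, hjM, hj⟩ := exists_isArc hw hi (by rw [ha.height_eq_zero]; exact hnn i hi.le)
    exact ⟨j, hjM, Or.inl hj⟩

end IsAntipalindrome

lemma hasCrossing_two_iff {f : Equiv.Perm (Fin M)} :
    HasCrossing f 2 ↔
      ∃ a a' b b' : Fin M, a < a' ∧ a' < b ∧ b < b' ∧ f a = b ∧ f a' = b' := by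
  constructor
  · rintro ⟨a, b, ha, hb, hab, hf⟩
    exact ⟨a 0, a 1, b 0, b 1, ha (by decide), hab 1 0, hb (by decide), hf 0, hf 1⟩
  · rintro ⟨a, a', b, b', h₁, h₂, h₃, hb, hb'⟩
    refine ⟨![a, a'], ![b, b'], ?_, ?_, ?_, ?_⟩
    · simpa [Fin.strictMono_iff_lt_succ] using h₁
    · simpa [Fin.strictMono_iff_lt_succ] using h₃
    · have := h₁.trans h₂
      simp [Fin.forall_fin_two, h₂, this, h₂.trans h₃, this.trans h₃]
    · simp [Fin.forall_fin_two, hb, hb']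

section MatchingWord

variable {f f' : Equiv.Perm (Fin M)} {c : ℕ}

def partner (f : Equiv.Perm (Fin M)) (k : ℕ) : ℕ := if h : k < M then f ⟨k, h⟩ else k

def dyckWord (f : Equiv.Perm (Fin M)) (k : ℕ) : Bool := decide (k < partner f k)

@[simp] lemma partner_val (i : Fin M) : partner f i = f i := dif_pos i.2

lemma dyckWord_val (i : Fin M) : dyckWord f i = decide (i < f i) := by
  simp only [dyckWord, partner_val, Fin.lt_def]

lemma dyckWord_of_le (h : M ≤ c) : dyckWord f c = false := by
  simp [dyckWord, partner, not_lt.2 h]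

lemma injOn_partner : Set.InjOn (partner f) (Set.Iio M) := fun a ha b hb h => by
  simpa using congrArg Fin.val (f.injective (Fin.ext (by simpa [partner, ha.out, hb.out] using h) :
    f ⟨a, ha⟩ = f ⟨b, hb⟩))

lemma dyckWord_partner (hf : IsMatchingInv f) (hc : c < M) :
    dyckWord f (partner f c) = !dyckWord f c := by
  obtain ⟨c, rfl⟩ : ∃ i : Fin M, (i : ℕ) = c := ⟨⟨c, hc⟩, rfl⟩
  rw [partner_val, dyckWord_val, dyckWord_val, (hf c).1]
  rcases lt_or_gt_of_ne (hf c).2 with h | h <;> simp [h, h.not_gt]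

lemma partner_lt_of_dyckWord_eq_false (hf : IsMatchingInv f) (hc : c < M)
    (h : dyckWord f c = false) : partner f c < c := by
  obtain ⟨c, rfl⟩ : ∃ i : Fin M, (i : ℕ) = c := ⟨⟨c, hc⟩, rfl⟩
  rw [dyckWord_val, decide_eq_false_iff_not, not_lt] at h
  rw [partner_val]
  exact lt_of_le_of_ne h (Fin.val_ne_of_ne (hf c).2)

lemma height_dyckWord_nonneg (hf : IsMatchingInv f) {k : ℕ} (hk : k ≤ M) :
    0 ≤ height (dyckWord f) k := by
  refine sum_step_nonneg (g := partner f) (injOn_partner.mono fun c hc => ?_) fun c hc hw => ?_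
  · exact (mem_range.1 hc).trans_le hk
  · have hcM := (mem_range.1 hc).trans_le hk
    exact ⟨mem_range.2 ((partner_lt_of_dyckWord_eq_false hf hcM hw).trans (mem_range.1 hc)),
      by rw [dyckWord_partner hf hcM, hw]; rfl⟩

lemma partner_mem_Ioo (hf : IsMatchingInv f) (hnc : ¬HasCrossing f 2) {i : Fin M}
    (hc : c ∈ Ioo (i : ℕ) (f i)) : partner f c ∈ Ioo (i : ℕ) (f i) := by
  obtain ⟨c, rfl⟩ : ∃ k : Fin M, (k : ℕ) = c :=
    ⟨⟨c, (mem_Ioo.1 hc).2.trans (f i).2⟩, rfl⟩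
  simp only [mem_Ioo, Fin.val_fin_lt, partner_val] at hc ⊢
  rw [hasCrossing_two_iff] at hnc
  refine ⟨lt_of_not_ge fun h => ?_, lt_of_not_ge fun h => ?_⟩
  · have hne : f c ≠ i := fun e => hc.2.ne (by rw [← e, (hf c).1])
    exact hnc ⟨f c, i, c, f i, lt_of_le_of_ne h hne, hc.1, hc.2, (hf c).1, rfl⟩
  · have hne : f i ≠ f c := fun e => hc.1.ne (f.injective e)
    exact hnc ⟨i, c, f i, f c, hc.1, hc.2, lt_of_le_of_ne h hne, rfl, rfl⟩

lemma isArc_dyckWord (hf : IsMatchingInv f) (hnc : ¬HasCrossing f 2) {i : Fin M} (h : i < f i) :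
    IsArc (dyckWord f) i (f i) := by
  have hlt : ∀ c ∈ Icc (i : ℕ) (f i), c < M := fun c hc => (mem_Icc.1 hc).2.trans_lt (f i).2
  have hIcc : ∀ c ∈ Icc (i : ℕ) (f i), partner f c ∈ Icc (i : ℕ) (f i) := by
    intro c hc
    rcases (mem_Icc.1 hc).1.eq_or_lt with rfl | hic
    · simpa using h.le
    rcases (mem_Icc.1 hc).2.eq_or_lt with rfl | hcj
    · simpa [(hf i).1] using h.le
    exact Ioo_subset_Icc_self (partner_mem_Ioo hf hnc (mem_Ioo.2 ⟨hic, hcj⟩))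
  refine ⟨h, ?_, fun k hk₁ hk₂ => ?_⟩
  · rw [← height_add_sum_Ico (by omega : (i : ℕ) ≤ f i + 1), Ico_add_one_right_eq_Icc,
      sum_step_eq_zero (injOn_partner.mono hlt) fun c hc =>
        ⟨hIcc c hc, dyckWord_partner hf (hlt c hc)⟩, add_zero]
  · have hup : height (dyckWord f) (i + 1) = height (dyckWord f) i + 1 := by
      rw [height_succ, dyckWord_val, decide_eq_true h, step_true]
    have hIoo : ∀ c ∈ Ico ((i : ℕ) + 1) k, c ∈ Ioo (i : ℕ) (f i) := fun c hc => by
      rw [mem_Ico] at hc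
      exact mem_Ioo.2 ⟨by omega, by omega⟩
    have hltM : ∀ c ∈ Ioo (i : ℕ) (f i), c < M := fun c hc => (mem_Ioo.1 hc).2.trans (f i).2
    have := sum_step_nonneg (w := dyckWord f) (g := partner f)
      (injOn_partner.mono fun c hc => hltM c (hIoo c hc)) fun c hc hw => by
        have hcM := hltM c (hIoo c hc)
        have h₁ := partner_lt_of_dyckWord_eq_false hf hcM hw
        have h₂ := mem_Ioo.1 (partner_mem_Ioo hf hnc (hIoo c hc))
        have h₃ := mem_Ico.1 hc
        exact ⟨mem_Ico.2 ⟨by omega, by omega⟩, by rw [dyckWord_partner hf hcM, hw]; rfl⟩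
    rw [← height_add_sum_Ico (by omega : (i : ℕ) + 1 ≤ k)]
    omega

lemma isLinked_dyckWord (hf : IsMatchingInv f) (hnc : ¬HasCrossing f 2) (i : Fin M) :
    IsLinked (dyckWord f) i (f i) := by
  rcases lt_or_gt_of_ne (hf i).2 with h | h
  · have := isArc_dyckWord hf hnc (i := f i) (by rwa [(hf i).1])
    rw [(hf i).1] at this
    exact Or.inr this
  · exact Or.inl (isArc_dyckWord hf hnc h)

lemma eq_of_dyckWord_eq (hf : IsMatchingInv f) (hf' : IsMatchingInv f') (hnc : ¬HasCrossing f 2)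
    (hnc' : ¬HasCrossing f' 2) (h : dyckWord f = dyckWord f') : f = f' :=
  Equiv.ext fun i => Fin.ext <|
    (isLinked_dyckWord hf hnc i).unique (h ▸ isLinked_dyckWord hf' hnc' i)

lemma isAntipalindrome_dyckWord (hf : IsMatchingInv f) (hs : IsBilatSym f) :
    IsAntipalindrome (dyckWord f) M := by
  intro k hk
  obtain ⟨i, rfl⟩ : ∃ i : Fin M, (i : ℕ) = k := ⟨⟨k, hk⟩, rfl⟩
  rw [show M - 1 - i = (i.rev : ℕ) by rw [Fin.val_rev]; omega, dyckWord_val, dyckWord_val, hs]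
  simp only [Fin.rev_lt_rev]
  rcases lt_or_gt_of_ne (hf i).2 with h | h <;> simp [h, h.not_gt]

end MatchingWord

section OfWord

variable {f : Equiv.Perm (Fin M)}

lemma isMatchingInv_of_isLinked (hlink : ∀ i : Fin M, IsLinked w i (f i)) :
    IsMatchingInv f := fun i =>
  ⟨Fin.ext ((hlink (f i)).unique (hlink i).symm),
    fun h => (hlink i).ne (congrArg Fin.val h).symm⟩

lemma isBilatSym_of_isLinked (ha : IsAntipalindrome w M)
    (hlink : ∀ i : Fin M, IsLinked w i (f i)) : IsBilatSym f := fun i => by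
  have hrev : ∀ j : Fin M, (j.rev : ℕ) = M - 1 - j := fun j => by rw [Fin.val_rev]; omega
  refine Fin.ext ((hlink i.rev).unique ?_)
  rw [hrev, hrev]
  exact ha.isLinked_reflect (hlink i) i.2 (f i).2

lemma not_hasCrossing_of_isLinked (hlink : ∀ i : Fin M, IsLinked w i (f i)) :
    ¬HasCrossing f 2 := by
  rw [hasCrossing_two_iff]
  rintro ⟨a, a', b, b', h₁, h₂, h₃, rfl, rfl⟩
  exact ((hlink a).isArc_of_lt (h₁.trans h₂)).not_crossing
    ((hlink a').isArc_of_lt (h₂.trans h₃)) h₁ h₂ h₃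

lemma dyckWord_eq_of_isLinked (hlink : ∀ i : Fin M, IsLinked w i (f i)) (i : Fin M) :
    dyckWord f i = w i := by
  rw [dyckWord_val, Bool.eq_iff_iff, decide_eq_true_iff, (hlink i).eq_true_iff_lt, Fin.lt_def]

end OfWord

lemma IsAntipalindrome.exists_perm_isLinked (ha : IsAntipalindrome w M)
    (hnn : ∀ k ≤ M, 0 ≤ height w k) :
    ∃ f : Equiv.Perm (Fin M), ∀ i : Fin M, IsLinked w i (f i) := by
  have : ∀ i : Fin M, ∃ j : Fin M, IsLinked w i j := fun i => by
    obtain ⟨j, hj, h⟩ := ha.exists_isLinked hnn i.2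
    exact ⟨⟨j, hj⟩, h⟩
  choose g hg using this
  exact ⟨Function.Involutive.toPerm g fun i => Fin.ext ((hg (g i)).unique (hg i).symm), hg⟩

/-- The sets of down steps of the lattice paths of length `N` that never go below `0`. -/
def ballotSets (N : ℕ) : Finset (Finset ℕ) :=
  {D ∈ (range N).powerset | ∀ k ≤ N, 2 * #{i ∈ D | i < k} ≤ k}

section Ballot

variable {N : ℕ} {D : Finset ℕ}

lemma mem_ballotSets :
    D ∈ ballotSets N ↔ D ⊆ range N ∧ ∀ k ≤ N, 2 * #{i ∈ D | i < k} ≤ k := by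
  simp [ballotSets]

lemma notMem_of_mem_ballotSets (hD : D ∈ ballotSets N) : N ∉ D := fun hN => by
  simpa using (mem_ballotSets.1 hD).1 hN

lemma filter_lt_eq_self (hD : D ⊆ range N) (hk : N ≤ k) : {i ∈ D | i < k} = D :=
  filter_true_of_mem fun _ hi => (mem_range.1 (hD hi)).trans_le hk

lemma two_mul_card_le (hD : D ∈ ballotSets N) : 2 * #D ≤ N := by
  obtain ⟨hsub, h⟩ := mem_ballotSets.1 hD
  simpa [filter_lt_eq_self hsub le_rfl] using h N le_rfl

lemma filter_ballotSets_card_le_zero : {D ∈ ballotSets N | #D ≤ 0} = {∅} := by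
  ext D
  simp only [mem_filter, mem_ballotSets, nonpos_iff_eq_zero, card_eq_zero, mem_singleton]
  constructor
  · exact fun h => h.2
  · rintro rfl
    simp

lemma mem_ballotSets_succ_of_notMem (hN : N ∉ D) :
    D ∈ ballotSets (N + 1) ↔ D ∈ ballotSets N := by
  refine ⟨fun hD => ?_, fun hD => ?_⟩
  · obtain ⟨hsub, h⟩ := mem_ballotSets.1 hD
    refine mem_ballotSets.2 ⟨fun i hi => ?_, fun k hk => h k (by omega)⟩
    have := mem_range.1 (hsub hi)
    exact mem_range.2 (lt_of_le_of_ne (by omega) (by rintro rfl; exact hN hi))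
  · obtain ⟨hsub, h⟩ := mem_ballotSets.1 hD
    refine mem_ballotSets.2 ⟨hsub.trans (range_subset_range.2 N.le_succ), fun k hk => ?_⟩
    rcases hk.lt_or_eq with hk | rfl
    · exact h k (by omega)
    · rw [filter_lt_eq_self hsub N.le_succ]
      have := two_mul_card_le hD
      omega

lemma insert_mem_ballotSets_succ (hD : D ∈ ballotSets N) (h : 2 * #D + 2 ≤ N + 1) :
    insert N D ∈ ballotSets (N + 1) := by
  have hN := notMem_of_mem_ballotSets hD
  obtain ⟨hsub, hD⟩ := mem_ballotSets.1 hD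
  refine mem_ballotSets.2 ⟨insert_subset (by simp) (hsub.trans (range_subset_range.2 N.le_succ)),
    fun k hk => ?_⟩
  rcases hk.lt_or_eq with hk | rfl
  · rw [filter_insert, if_neg (by omega)]
    exact hD k (by omega)
  · rw [filter_lt_eq_self (insert_subset (by simp) (hsub.trans (range_subset_range.2 N.le_succ)))
      le_rfl, card_insert_of_notMem hN]
    omega

lemma erase_mem_ballotSets (hD : D ∈ ballotSets (N + 1)) : D.erase N ∈ ballotSets N := by
  obtain ⟨hsub, hD⟩ := mem_ballotSets.1 hD
  refine mem_ballotSets.2 ⟨fun i hi => ?_, fun k hk => ?_⟩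
  · have := mem_range.1 (hsub (mem_of_mem_erase hi))
    exact mem_range.2 (lt_of_le_of_ne (by omega) (ne_of_mem_erase hi))
  · exact (Nat.mul_le_mul_left 2 (card_le_card (filter_subset_filter _ (erase_subset N D)))).trans
      (hD k (by omega))

lemma card_filter_ballotSets_succ {j : ℕ} (hj : 2 * (j + 1) ≤ N + 1) :
    #{D ∈ ballotSets (N + 1) | #D ≤ j + 1} =
      #{D ∈ ballotSets N | #D ≤ j + 1} + #{D ∈ ballotSets N | #D ≤ j} := by
  rw [← card_filter_add_card_filter_not (fun D => N ∉ D), filter_filter, filter_filter]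
  simp only [not_not]
  congr 1
  · congr 1
    ext D
    simp only [mem_filter]
    constructor
    · rintro ⟨hD, hcard, hN⟩
      exact ⟨(mem_ballotSets_succ_of_notMem hN).1 hD, hcard⟩
    · rintro ⟨hD, hcard⟩
      exact ⟨(mem_ballotSets_succ_of_notMem (notMem_of_mem_ballotSets hD)).2 hD, hcard,
        notMem_of_mem_ballotSets hD⟩
  · refine card_nbij' (·.erase N) (insert N) (fun D hD => ?_) (fun D hD => ?_)
      (fun D hD => insert_erase (mem_filter.1 hD).2.2)
      (fun D hD => erase_insert (notMem_of_mem_ballotSets (mem_filter.1 hD).1))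
    · obtain ⟨hD, hcard, hND⟩ := mem_filter.1 hD
      have := card_erase_of_mem hND
      exact mem_filter.2 ⟨erase_mem_ballotSets hD, show #(D.erase N) ≤ j by omega⟩
    · obtain ⟨hD, hcard⟩ := mem_filter.1 hD
      rw [coe_filter, Set.mem_ofPred_eq, card_insert_of_notMem (notMem_of_mem_ballotSets hD)]
      exact ⟨insert_mem_ballotSets_succ hD (by omega), by omega, mem_insert_self N D⟩

theorem card_filter_ballotSets_card_le : ∀ {N j : ℕ}, 2 * j ≤ N →
    #{D ∈ ballotSets N | #D ≤ j} = N.choose j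
  | N, 0, _ => by rw [filter_ballotSets_card_le_zero, card_singleton, Nat.choose_zero_right]
  | 0, _ + 1, hj => by omega
  | N + 1, j + 1, hj => by
    rw [card_filter_ballotSets_succ (by omega),
      card_filter_ballotSets_card_le (by omega : 2 * j ≤ N), Nat.choose_succ_succ', add_comm]
    congr 1
    rcases (show 2 * (j + 1) ≤ N ∨ N = 2 * j + 1 by omega) with h | rfl
    · exact card_filter_ballotSets_card_le h
    · rw [Nat.choose_symm_half,
        ← card_filter_ballotSets_card_le (by omega : 2 * j ≤ 2 * j + 1)]
      exact congrArg card (filter_congr fun D hD => by have := two_mul_card_le hD; omega)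

theorem card_ballotSets (N : ℕ) : #(ballotSets N) = N.choose (N / 2) := by
  rw [← card_filter_ballotSets_card_le (by omega), filter_true_of_mem fun D hD => ?_]
  have := two_mul_card_le hD
  omega

end Ballot

def downSteps (w : ℕ → Bool) (N : ℕ) : Finset ℕ := {k ∈ range N | w k = false}

lemma downSteps_eq_downSteps_iff {N : ℕ} :
    downSteps w N = downSteps w' N ↔ ∀ k < N, w k = w' k := by
  simp only [downSteps, Finset.ext_iff, mem_filter, mem_range]
  refine forall_congr' fun k => ⟨fun h hk => ?_, fun h => ?_⟩
  · cases hw : w k <;> cases hw' : w' k <;> simp_all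
  · by_cases hk : k < N <;> simp [hk, h]

lemma downSteps_mem_ballotSets_iff {N : ℕ} :
    downSteps w N ∈ ballotSets N ↔ ∀ k ≤ N, 0 ≤ height w k := by
  rw [mem_ballotSets]
  refine (and_iff_right (filter_subset _ _)).trans (forall₂_congr fun k hk => ?_)
  have : {i ∈ downSteps w N | i < k} = {i ∈ range k | w i = false} := by
    ext i
    simp only [downSteps, mem_filter, mem_range]
    exact ⟨fun ⟨⟨_, h⟩, hi⟩ => ⟨hi, h⟩,
      fun ⟨hi, h⟩ => ⟨⟨by omega, h⟩, hi⟩⟩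
  rw [this, height_eq_sub_card]
  omega

def antipalExt (N : ℕ) (v : ℕ → Bool) (k : ℕ) : Bool :=
  if k < N then v k else !v (2 * N - 1 - k)

section AntipalExt

variable {N : ℕ} {v : ℕ → Bool}

lemma antipalExt_of_lt (hk : k < N) : antipalExt N v k = v k := if_pos hk

lemma isAntipalindrome_antipalExt : IsAntipalindrome (antipalExt N v) (2 * N) := fun k hk => by
  by_cases h : k < N
  · rw [antipalExt, if_neg (by omega), antipalExt_of_lt h,
      show 2 * N - 1 - (2 * N - 1 - k) = k by omega]
  · rw [antipalExt_of_lt (by omega), antipalExt, if_neg h, Bool.not_not]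

lemma height_antipalExt_nonneg (h : ∀ k ≤ N, 0 ≤ height v k) :
    ∀ k ≤ 2 * N, 0 ≤ height (antipalExt N v) k := by
  have hlow : ∀ k ≤ N, height (antipalExt N v) k = height v k := fun k hk =>
    height_congr fun i hi => antipalExt_of_lt (by omega)
  intro k hk
  rcases le_total k N with hkN | hkN
  · rw [hlow k hkN]; exact h k hkN
  · rw [← isAntipalindrome_antipalExt.height_sub hk, hlow _ (by omega)]; exact h _ (by omega)

end AntipalExt

lemma eq_of_downSteps_dyckWord_eq {N : ℕ} {f f' : Equiv.Perm (Fin (2 * N))}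
    (hf : IsMatchingInv f ∧ IsBilatSym f ∧ ¬HasCrossing f 2)
    (hf' : IsMatchingInv f' ∧ IsBilatSym f' ∧ ¬HasCrossing f' 2)
    (h : downSteps (dyckWord f) N = downSteps (dyckWord f') N) : f = f' := by
  have hhalf := (isAntipalindrome_dyckWord hf.1 hf.2.1).eq_of_lt_half
    (isAntipalindrome_dyckWord hf'.1 hf'.2.1) (downSteps_eq_downSteps_iff.1 h)
  refine eq_of_dyckWord_eq hf.1 hf'.1 hf.2.2 hf'.2.2 (funext fun k => ?_)
  rcases lt_or_ge k (2 * N) with hk | hk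
  · exact hhalf k hk
  · rw [dyckWord_of_le hk, dyckWord_of_le hk]

lemma exists_isAntipalindrome_downSteps_eq {N : ℕ} {D : Finset ℕ} (hD : D ∈ ballotSets N) :
    ∃ u, IsAntipalindrome u (2 * N) ∧ (∀ k ≤ 2 * N, 0 ≤ height u k) ∧
      downSteps u N = D := by
  have hv : downSteps (fun k => decide (k ∉ D)) N = D := by
    ext k
    simp only [downSteps, mem_filter, mem_range, decide_eq_false_iff_not, not_not]
    exact ⟨And.right, fun hk => ⟨mem_range.1 ((mem_ballotSets.1 hD).1 hk), hk⟩⟩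
  have hu : downSteps (antipalExt N fun k => decide (k ∉ D)) N = D :=
    (downSteps_eq_downSteps_iff.2 fun k hk => antipalExt_of_lt hk).trans hv
  refine ⟨_, isAntipalindrome_antipalExt, height_antipalExt_nonneg ?_, hu⟩
  rw [← downSteps_mem_ballotSets_iff, hv]
  exact hD

lemma exists_downSteps_dyckWord_eq {N : ℕ} {D : Finset ℕ} (hD : D ∈ ballotSets N) :
    ∃ f : Equiv.Perm (Fin (2 * N)), (IsMatchingInv f ∧ IsBilatSym f ∧ ¬HasCrossing f 2) ∧
      downSteps (dyckWord f) N = D := by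
  obtain ⟨u, ha, hnn, hu⟩ := exists_isAntipalindrome_downSteps_eq hD
  obtain ⟨f, hlink⟩ := ha.exists_perm_isLinked hnn
  refine ⟨f, ⟨isMatchingInv_of_isLinked hlink, isBilatSym_of_isLinked ha hlink,
    not_hasCrossing_of_isLinked hlink⟩, (downSteps_eq_downSteps_iff.2 fun k hk => ?_).trans hu⟩
  exact dyckWord_eq_of_isLinked hlink ⟨k, by omega⟩

theorem card_bilatSym_noncrossing (N : ℕ) :
    Nat.card {f : Equiv.Perm (Fin (2 * N)) //
      IsMatchingInv f ∧ IsBilatSym f ∧ ¬HasCrossing f 2} = #(ballotSets N) := by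
  rw [← Nat.card_eq_finsetCard]
  refine Nat.card_eq_of_bijective (fun f => ⟨downSteps (dyckWord f.1) N,
    downSteps_mem_ballotSets_iff.2 fun k hk => height_dyckWord_nonneg f.2.1 (by omega)⟩)
    ⟨fun f f' h => Subtype.ext (eq_of_downSteps_dyckWord_eq f.2 f'.2 (congrArg Subtype.val h)),
      fun D => ?_⟩
  obtain ⟨f, hf, hD⟩ := exists_downSteps_dyckWord_eq D.2
  exact ⟨⟨f, hf⟩, Subtype.ext hD⟩

end BilatSymMatching

open BilatSymMatching in
theorem bsmCount_one (N : ℕ) : bsmCount N 1 = N.choose (N / 2) :=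
  (card_bilatSym_noncrossing N).trans (card_ballotSets N)

theorem bsm_one (n : ℕ) :
    bsmCount (2 * n) 1 = Nat.choose (2 * n) n ∧
      (bsmCount (2 * n + 1) 1 : ℚ) = (1 / 2 : ℚ) * Nat.choose (2 * n + 2) (n + 1) := by
  refine ⟨by rw [bsmCount_one, Nat.mul_div_cancel_left n two_pos], ?_⟩
  rw [bsmCount_one, show (2 * n + 1) / 2 = n by omega, Nat.choose_succ_succ',
    Nat.choose_symm_half]
  push_cast
  ring
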